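/- arXiv:1606.05075 — 6 statements merged into one kernel-verified Lean document; each statement's English description precedes it below -/
import Mathlib

section
/- Let c > 0, p ∈ ℕ. Define A(u) = (c/2)u^2 - u^{p+2}/(p+2) and B(u) = (1/2)(c - u^p)^2. Then E(u,v) = A(u) + B(u)v^2 is a first integral of the planar system u' = v, v' = (-u + p u^{p-1} v^2)/(c - u^p): along any C^1 solution (u(z), v(z)) with c - u(z)^p ≠ 0 for all z, the function z ↦ A(u(z)) + B(u(z)) v(z)^2 is constant. -/
/-!
Any system `u' = v`, `v' = -(A'(u) + B'(u) v²) / (2 B(u))` conserves `E = A(u) + B(u) v²`,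
since by the chain rule `dE/dz = v (A'(u) + B'(u) v² + 2 B(u) v')`. The planar system is of this
form: `A'(u) = u (c - uᵖ)` and `B'(u) = -p u^{p-1} (c - uᵖ)`, so dividing by `2 B(u) = (c - uᵖ)²`
leaves exactly `(-u + p u^{p-1} v²) / (c - uᵖ)`.
-/

theorem energy_eq_of_hasDerivAt {A B A' B' u v : ℝ → ℝ}
    (hA : ∀ x, HasDerivAt A (A' x) x) (hB : ∀ x, HasDerivAt B (B' x) x)
    (hB₀ : ∀ z, B (u z) ≠ 0) (hu : ∀ z, HasDerivAt u (v z) z)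
    (hv : ∀ z, HasDerivAt v (-(A' (u z) + B' (u z) * v z ^ 2) / (2 * B (u z))) z)
    (z₁ z₂ : ℝ) :
    A (u z₁) + B (u z₁) * v z₁ ^ 2 = A (u z₂) + B (u z₂) * v z₂ ^ 2 := by
  have hE : ∀ z, HasDerivAt (fun z => A (u z) + B (u z) * v z ^ 2) 0 z := by
    intro z
    refine (((hA (u z)).comp z (hu z)).add
      (((hB (u z)).comp z (hu z)).mul ((hv z).pow 2))).congr_deriv ?_
    simp only [Function.comp_apply, Pi.pow_apply]
    field_simp [hB₀ z]
    ring
  exact is_const_of_deriv_eq_zero (fun z => (hE z).differentiableAt) (fun z => (hE z).deriv) z₁ z₂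

namespace PlanarSystem

variable (c : ℝ) (p : ℕ)

noncomputable def A (x : ℝ) : ℝ := c / 2 * x ^ 2 - x ^ (p + 2) / (p + 2)

noncomputable def B (x : ℝ) : ℝ := 1 / 2 * (c - x ^ p) ^ 2

theorem hasDerivAt_A (x : ℝ) : HasDerivAt (A c p) (x * (c - x ^ p)) x := by
  refine (((hasDerivAt_pow 2 x).const_mul (c / 2)).sub ((hasDerivAt_pow (p + 2) x).div_const
    ((p : ℝ) + 2))).congr_deriv ?_
  field_simp
  push_cast
  ring

theorem hasDerivAt_B (x : ℝ) :
    HasDerivAt (B c p) (-(p * x ^ (p - 1)) * (c - x ^ p)) x := by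
  refine ((((hasDerivAt_const x c).sub (hasDerivAt_pow p x)).pow 2).const_mul
    (1 / 2 : ℝ)).congr_deriv ?_
  simp only [Pi.sub_apply]
  push_cast
  ring

theorem vectorField_eq_energy_form {x : ℝ} (hx : c - x ^ p ≠ 0) (y : ℝ) :
    (-x + p * x ^ (p - 1) * y ^ 2) / (c - x ^ p)
      = -(x * (c - x ^ p) + -(p * x ^ (p - 1)) * (c - x ^ p) * y ^ 2) / (2 * B c p x) := by
  rw [B]
  field_simp
  ring

end PlanarSystem

open PlanarSystem in
theorem first_integral_planar_general (c : ℝ) (p : ℕ)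
    (u v : ℝ → ℝ) (hreg : ∀ z, c - u z ^ p ≠ 0)
    (hu : ∀ z, HasDerivAt u (v z) z)
    (hv : ∀ z, HasDerivAt v ((-u z + p * u z ^ (p - 1) * (v z) ^ 2) / (c - u z ^ p)) z) :
    ∀ z₁ z₂ : ℝ,
      (c / 2 * u z₁ ^ 2 - u z₁ ^ (p + 2) / (p + 2))
          + (1 / 2) * (c - u z₁ ^ p) ^ 2 * (v z₁) ^ 2
      = (c / 2 * u z₂ ^ 2 - u z₂ ^ (p + 2) / (p + 2))
          + (1 / 2) * (c - u z₂ ^ p) ^ 2 * (v z₂) ^ 2 := by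
  have hB₀ : ∀ z, B c p (u z) ≠ 0 := fun z => by simp [B, hreg z]
  simp only [vectorField_eq_energy_form c p (hreg _)] at hv
  exact energy_eq_of_hasDerivAt (hasDerivAt_A c p) (hasDerivAt_B c p) hB₀ hu hv

/-- `E(u,v) = A(u) + B(u)v²` is a first integral of the planar system
`u' = v`, `v' = (-u + p u^{p-1} v²)/(c - uᵖ)`: along any `C¹` solution with
`c - u(z)ᵖ ≠ 0` for all `z`, the quantity `A(u(z)) + B(u(z))v(z)²` is constant. -/
theorem first_integral_planar (c : ℝ) (hc : 0 < c) (p : ℕ) (hp : 1 ≤ p)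
    (u v : ℝ → ℝ) (hreg : ∀ z, c - u z ^ p ≠ 0)
    (hu : ∀ z, HasDerivAt u (v z) z)
    (hv : ∀ z, HasDerivAt v ((-u z + p * u z ^ (p - 1) * (v z) ^ 2) / (c - u z ^ p)) z) :
    ∀ z₁ z₂ : ℝ,
      (c / 2 * u z₁ ^ 2 - u z₁ ^ (p + 2) / (p + 2))
          + (1 / 2) * (c - u z₁ ^ p) ^ 2 * (v z₁) ^ 2
      = (c / 2 * u z₂ ^ 2 - u z₂ ^ (p + 2) / (p + 2))
          + (1 / 2) * (c - u z₂ ^ p) ^ 2 * (v z₂) ^ 2 :=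
  first_integral_planar_general c p u v hreg hu hv
end

section
/- For p = 1 and c = 1, the constant T_1 defined by T_1 = ∫_0^1 (1-x)/√(1 - x^2 - (2/3)(1 - x^3)) dx + ∫_0^{q_-} (1+x)/√(1 - x^2 - (2/3)(1 + x^3)) dx (with q_- ∈ (0,1) the positive root of q^2 + (2/3)q^3 = 1/3) is a finite positive real number. -/
open MeasureTheory

private lemma fact1 (x : ℝ) : 1 - x ^ 2 - (2 / 3) * (1 - x ^ 3)
    = (1 - x) ^ 2 * ((1 + 2 * x) / 3) := by ring

private lemma fact2 (x : ℝ) : 1 - x ^ 2 - (2 / 3) * (1 + x ^ 3)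
    = (1 + x) ^ 2 * ((1 - 2 * x) / 3) := by ring

private lemma sqrt_fact1 {x : ℝ} (hx : x ≤ 1) :
    Real.sqrt (1 - x ^ 2 - (2 / 3) * (1 - x ^ 3))
      = (1 - x) * Real.sqrt ((1 + 2 * x) / 3) := by
  rw [fact1, Real.sqrt_mul (sq_nonneg _), Real.sqrt_sq (by linarith)]

private lemma sqrt_fact2 {x : ℝ} (hx : -1 ≤ x) :
    Real.sqrt (1 - x ^ 2 - (2 / 3) * (1 + x ^ 3))
      = (1 + x) * Real.sqrt ((1 - 2 * x) / 3) := by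
  rw [fact2, Real.sqrt_mul (sq_nonneg _), Real.sqrt_sq (by linarith)]

private lemma eq1 {x : ℝ} (hx0 : 0 ≤ x) (hx1 : x < 1) :
    (1 - x) / Real.sqrt (1 - x ^ 2 - (2 / 3) * (1 - x ^ 3))
      = (Real.sqrt ((1 + 2 * x) / 3))⁻¹ := by
  rw [sqrt_fact1 hx1.le]
  exact div_mul_cancel_left₀ (by linarith) _

private lemma eq2 {x : ℝ} (hx0 : -1 < x) :
    (1 + x) / Real.sqrt (1 - x ^ 2 - (2 / 3) * (1 + x ^ 3))
      = (Real.sqrt ((1 - 2 * x) / 3))⁻¹ := by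
  rw [sqrt_fact2 hx0.le]
  rcases le_or_gt x (1/2) with h | h
  · rcases eq_or_lt_of_le h with rfl | h'
    · norm_num
    · exact div_mul_cancel_left₀ (by linarith) _
  · have h1 : (1 - 2 * x) / 3 < 0 := by linarith
    rw [Real.sqrt_eq_zero_of_nonpos h1.le]
    simp

/-- For `p = 1` (and `c` normalized to `1`), with `q₋ ∈ (0,1)` the positive root of
`q² + (2/3)q³ = 1/3`, both integrals in the definition
`T₁ = ∫₀¹ (1-x)/√(1 - x² - (2/3)(1-x³)) dx + ∫₀^{q₋} (1+x)/√(1 - x² - (2/3)(1+x³)) dx`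
converge, and `T₁` is a finite positive real number. -/
theorem T1_pos (q : ℝ) (hq : q ∈ Set.Ioo (0 : ℝ) 1)
    (hroot : q ^ 2 + (2 / 3) * q ^ 3 = 1 / 3) :
    IntervalIntegrable
      (fun x : ℝ => (1 - x) / Real.sqrt (1 - x ^ 2 - (2 / 3) * (1 - x ^ 3)))
      volume 0 1 ∧
    IntervalIntegrable
      (fun x : ℝ => (1 + x) / Real.sqrt (1 - x ^ 2 - (2 / 3) * (1 + x ^ 3)))
      volume 0 q ∧
    0 < (∫ x in (0 : ℝ)..1, (1 - x) / Real.sqrt (1 - x ^ 2 - (2 / 3) * (1 - x ^ 3)))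
        + ∫ x in (0 : ℝ)..q, (1 + x) / Real.sqrt (1 - x ^ 2 - (2 / 3) * (1 + x ^ 3)) := by
  obtain ⟨hq0, hq1⟩ := hq
  -- q = 1/2
  have hqval : q = 1 / 2 := by
    have hfac : (2 * q - 1) * (q + 1) ^ 2 = 0 := by nlinarith
    have h2 : (q + 1) ^ 2 ≠ 0 := by positivity
    have := mul_eq_zero.mp hfac
    rcases this with h | h
    · linarith
    · exact absurd h h2
  subst hqval
  -- Integrability of the first integral
  have hI1 : IntervalIntegrable
      (fun x : ℝ => (1 - x) / Real.sqrt (1 - x ^ 2 - (2 / 3) * (1 - x ^ 3)))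
      volume 0 1 := by
    have hg : IntervalIntegrable (fun x : ℝ => (Real.sqrt ((1 + 2 * x) / 3))⁻¹)
        volume 0 1 := by
      apply ContinuousOn.intervalIntegrable
      apply ContinuousOn.inv₀
      · fun_prop
      · intro x hx
        rw [Set.uIcc_of_le (by norm_num)] at hx
        have : (0:ℝ) < (1 + 2 * x) / 3 := by
          have := hx.1; linarith
        exact (Real.sqrt_pos.mpr this).ne'
    rw [intervalIntegrable_iff] at hg ⊢
    apply hg.congr_fun_ae
    have hne : ∀ᵐ x : ℝ ∂volume, x ≠ 1 := by
      refine (ae_iff ..).mpr ?_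
      have : {x : ℝ | ¬ x ≠ 1} = {1} := by ext x; simp
      rw [this]
      exact Real.volume_singleton
    filter_upwards [ae_restrict_mem measurableSet_uIoc, ae_restrict_of_ae hne] with x hx hx1
    rw [Set.uIoc_of_le (by norm_num : (0:ℝ) ≤ 1)] at hx
    exact (eq1 hx.1.le (lt_of_le_of_ne hx.2 hx1)).symm
  -- Integrability of the second integral
  have hI2 : IntervalIntegrable
      (fun x : ℝ => (1 + x) / Real.sqrt (1 - x ^ 2 - (2 / 3) * (1 + x ^ 3)))
      volume 0 (1/2) := by
    have hbase : IntervalIntegrable (fun t : ℝ => t ^ (-(1/2) : ℝ)) volume 0 1 :=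
      intervalIntegral.intervalIntegrable_rpow' (by norm_num)
    have h1 : IntervalIntegrable (fun x : ℝ => (1 - x) ^ (-(1/2) : ℝ)) volume 0 1 := by
      have := hbase.comp_sub_left 1
      simpa using this.symm
    have h2 : IntervalIntegrable (fun x : ℝ => (1 - 2 * x) ^ (-(1/2) : ℝ)) volume 0 (1/2) := by
      have := h1.comp_mul_left (c := 2) (by norm_num) (by norm_num)
      norm_num at this
      exact this
    have hg : IntervalIntegrable
        (fun x : ℝ => Real.sqrt 3 * (1 - 2 * x) ^ (-(1/2) : ℝ)) volume 0 (1/2) :=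
      h2.const_mul _
    rw [intervalIntegrable_iff] at hg ⊢
    apply hg.congr_fun_ae
    filter_upwards [ae_restrict_mem measurableSet_uIoc] with x hx
    rw [Set.uIoc_of_le (by norm_num : (0:ℝ) ≤ 1/2)] at hx
    have hx0 : 0 < x := hx.1
    have hx2 : (0:ℝ) ≤ 1 - 2 * x := by have := hx.2; linarith
    rw [eq2 (by linarith)]
    rw [Real.rpow_neg hx2, ← Real.sqrt_eq_rpow, Real.sqrt_div hx2, inv_div]
    ring
  -- Positivity
  refine ⟨hI1, hI2, ?_⟩
  have hp1 : 0 < ∫ x in (0:ℝ)..1,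
      (1 - x) / Real.sqrt (1 - x ^ 2 - (2 / 3) * (1 - x ^ 3)) := by
    apply intervalIntegral.intervalIntegral_pos_of_pos_on hI1 _ (by norm_num)
    intro x hx
    have h1 : (0:ℝ) < 1 - x ^ 2 - (2 / 3) * (1 - x ^ 3) := by
      rw [fact1]
      have ha : (0:ℝ) < (1 - x)^2 := by nlinarith [hx.2]
      have hb : (0:ℝ) < (1 + 2*x)/3 := by linarith [hx.1]
      exact mul_pos ha hb
    have h2 := Real.sqrt_pos.mpr h1
    have h3 : (0:ℝ) < 1 - x := by linarith [hx.2]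
    positivity
  have hp2 : 0 < ∫ x in (0:ℝ)..(1/2),
      (1 + x) / Real.sqrt (1 - x ^ 2 - (2 / 3) * (1 + x ^ 3)) := by
    apply intervalIntegral.intervalIntegral_pos_of_pos_on hI2 _ (by norm_num)
    intro x hx
    have h1 : (0:ℝ) < 1 - x ^ 2 - (2 / 3) * (1 + x ^ 3) := by
      rw [fact2]
      have h4 : (0:ℝ) < (1 + x)^2 := by nlinarith [hx.1]
      have h5 : (0:ℝ) < (1 - 2*x)/3 := by linarith [hx.2]
      exact mul_pos h4 h5
    have h2 := Real.sqrt_pos.mpr h1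
    have h3 : (0:ℝ) < 1 + x := by linarith [hx.1]
    positivity
  linarith
end

section
/- Under the same hypotheses, integrating the first integral E = (1/2)(c-U^p)^2 (U')^2 + (c/2)U^2 - U^{p+2}/(p+2) over the period yields 2ET = c‖U‖²_{L²(-T,T)} - ((3p+4)/(2(p+1)(p+2))) ∫_{-T}^T U^{p+2} dz. -/
/-- Under the hypotheses of the travelling-wave identities, integrating the first
integral `E = ½(c-Uᵖ)²(U')² + (c/2)U² - U^{p+2}/(p+2)` over the period yields
`2ET = c‖U‖² - ((3p+4)/(2(p+1)(p+2))) ∫ U^{p+2}`. -/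
theorem identity_energy_integrated (c T : ℝ) (hc : 0 < c) (hT : 0 < T)
    (p : ℕ) (hp : 1 ≤ p) (E : ℝ) (U V : ℝ → ℝ)
    (hU : ContDiff ℝ (⊤ : ℕ∞) U) (hUper : Function.Periodic U (2 * T))
    (hUmean : (∫ z in (-T)..T, U z) = 0)
    (hV : ∀ z, HasDerivAt V (U z) z) (hVper : Function.Periodic V (2 * T))
    (hVmean : (∫ z in (-T)..T, V z) = 0)
    (hode : ∀ z, (c - U z ^ p) * deriv U z + V z = 0)
    (hE : ∀ z, (1 / 2) * (c - U z ^ p) ^ 2 * (deriv U z) ^ 2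
      + c / 2 * (U z) ^ 2 - U z ^ (p + 2) / ((p : ℝ) + 2) = E) :
    2 * E * T
      = c * (∫ z in (-T)..T, (U z) ^ 2)
        - ((3 * (p : ℝ) + 4) / (2 * ((p : ℝ) + 1) * ((p : ℝ) + 2)))
          * ∫ z in (-T)..T, U z ^ (p + 2) := by
  have hp1 : ((p : ℝ) + 1) ≠ 0 := by positivity
  have hp2 : ((p : ℝ) + 2) ≠ 0 := by positivity
  have hcU : Continuous U := hU.continuous
  have hVd : Differentiable ℝ V := fun z => (hV z).differentiableAt
  have hcV : Continuous V := hVd.continuous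
  have hUd : Differentiable ℝ U := hU.differentiable (by simp)
  -- pointwise: (c - U^p)^2 (U')^2 = V^2
  have hVsq : ∀ z, (c - U z ^ p) ^ 2 * (deriv U z) ^ 2 = V z ^ 2 := by
    intro z
    linear_combination ((c - U z ^ p) * deriv U z - V z) * hode z
  have hE2 : ∀ z, (1/2) * V z ^ 2 + c/2 * U z ^ 2 - (1/((p:ℝ)+2)) * U z ^ (p+2) = E := by
    intro z
    have h1 := hE z
    have h2 := hVsq z
    linear_combination h1 - (1/2) * h2
  set A := ∫ z in (-T)..T, V z ^ 2 with hA
  set B := ∫ z in (-T)..T, U z ^ 2 with hB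
  set C := ∫ z in (-T)..T, U z ^ (p+2) with hC
  have hiV : IntervalIntegrable (fun z => V z ^ 2) MeasureTheory.volume (-T) T :=
    (hcV.pow 2).intervalIntegrable _ _
  have hiU2 : IntervalIntegrable (fun z => U z ^ 2) MeasureTheory.volume (-T) T :=
    (hcU.pow 2).intervalIntegrable _ _
  have hiUp : IntervalIntegrable (fun z => U z ^ (p+2)) MeasureTheory.volume (-T) T :=
    (hcU.pow (p+2)).intervalIntegrable _ _
  -- integrate the energy identity
  have e1 : (1/2) * A + (c/2) * B - (1/((p:ℝ)+2)) * C = 2 * E * T := by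
    have h : (∫ z in (-T)..T,
        ((1/2) * V z ^ 2 + c/2 * U z ^ 2 - (1/((p:ℝ)+2)) * U z ^ (p+2)))
        = ∫ z in (-T)..T, E := by
      apply intervalIntegral.integral_congr
      intro z _
      exact hE2 z
    rw [intervalIntegral.integral_sub (((hiV.const_mul _).add (hiU2.const_mul _)))
      (hiUp.const_mul _), intervalIntegral.integral_add (hiV.const_mul _) (hiU2.const_mul _),
      intervalIntegral.integral_const_mul, intervalIntegral.integral_const_mul,
      intervalIntegral.integral_const_mul, intervalIntegral.integral_const] at h
    rw [← hA, ← hB, ← hC] at h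
    rw [h, smul_eq_mul]; ring
  -- the key identity A = c B - C/(p+1), via F = (cU - U^{p+1}/(p+1)) V
  have hF : ∀ z, HasDerivAt (fun z => (c * U z - U z ^ (p+1) / ((p:ℝ)+1)) * V z)
      (-(V z ^ 2) + c * U z ^ 2 - U z ^ (p+2) / ((p:ℝ)+1)) z := by
    intro z
    have hU' : HasDerivAt U (deriv U z) z := (hUd z).hasDerivAt
    have hW : HasDerivAt (fun z => c * U z - U z ^ (p+1) / ((p:ℝ)+1))
        ((c - U z ^ p) * deriv U z) z := by
      have h := (hU'.const_mul c).sub ((hU'.pow (p+1)).div_const ((p:ℝ)+1))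
      refine h.congr_deriv ?_
      push_cast
      field_simp
    have h := hW.mul (hV z)
    refine h.congr_deriv ?_
    have ho := hode z
    push_cast
    linear_combination (V z) * ho
  have e2 : A = c * B - (1/((p:ℝ)+1)) * C := by
    have hint : (∫ z in (-T)..T,
        (-(V z ^ 2) + c * U z ^ 2 - U z ^ (p+2) / ((p:ℝ)+1)))
        = (c * U T - U T ^ (p+1) / ((p:ℝ)+1)) * V T
          - (c * U (-T) - U (-T) ^ (p+1) / ((p:ℝ)+1)) * V (-T) := by
      apply intervalIntegral.integral_eq_sub_of_hasDerivAt
      · intro z _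
        exact hF z
      · exact (hiV.neg.add (hiU2.const_mul _)).sub (hiUp.div_const _)
    have hUT : U T = U (-T) := by
      have h := hUper (-T); rw [show -T + 2 * T = T by ring] at h; exact h
    have hVT : V T = V (-T) := by
      have h := hVper (-T); rw [show -T + 2 * T = T by ring] at h; exact h
    rw [hUT, hVT, sub_self] at hint
    have hint' : (∫ z in (-T)..T,
        (c * U z ^ 2 - (1/((p:ℝ)+1)) * U z ^ (p+2) - V z ^ 2)) = 0 := by
      rw [← hint]
      apply intervalIntegral.integral_congr
      intro z _
      ring
    rw [intervalIntegral.integral_sub ((hiU2.const_mul c).sub (hiUp.const_mul _)) hiV,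
      intervalIntegral.integral_sub (hiU2.const_mul c) (hiUp.const_mul _),
      intervalIntegral.integral_const_mul, intervalIntegral.integral_const_mul] at hint'
    rw [← hA, ← hB, ← hC] at hint'
    linarith [hint']
  rw [← e1, e2]
  field_simp
  ring
end

section
/- Under the same hypotheses, ‖∂_z^{-1}U‖²_{L²(-T,T)} = 2ET + (p/(2(p+1)(p+2))) ∫_{-T}^T U^{p+2} dz. -/
open MeasureTheory intervalIntegral

/-- Under the hypotheses of the travelling-wave identities,
`‖∂_z⁻¹U‖² = 2ET + (p/(2(p+1)(p+2))) ∫ U^{p+2}`. -/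
theorem identity_antiderivative_energy (c T : ℝ) (hc : 0 < c) (hT : 0 < T)
    (p : ℕ) (hp : 1 ≤ p) (E : ℝ) (U V : ℝ → ℝ)
    (hU : ContDiff ℝ (⊤ : ℕ∞) U) (hUper : Function.Periodic U (2 * T))
    (hUmean : (∫ z in (-T)..T, U z) = 0)
    (hV : ∀ z, HasDerivAt V (U z) z) (hVper : Function.Periodic V (2 * T))
    (hVmean : (∫ z in (-T)..T, V z) = 0)
    (hode : ∀ z, (c - U z ^ p) * deriv U z + V z = 0)
    (hE : ∀ z, (1 / 2) * (c - U z ^ p) ^ 2 * (deriv U z) ^ 2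
      + c / 2 * (U z) ^ 2 - U z ^ (p + 2) / ((p : ℝ) + 2) = E) :
    (∫ z in (-T)..T, (V z) ^ 2)
      = 2 * E * T
        + ((p : ℝ) / (2 * ((p : ℝ) + 1) * ((p : ℝ) + 2)))
          * ∫ z in (-T)..T, U z ^ (p + 2) := by
  have hp1 : ((p : ℝ) + 1) ≠ 0 := by positivity
  have hp2 : ((p : ℝ) + 2) ≠ 0 := by positivity
  have hUc : Continuous U := hU.continuous
  have hU'c : Continuous (deriv U) := hU.continuous_deriv (by simp)
  have hVd : Differentiable ℝ V := fun z => (hV z).differentiableAt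
  have hVc : Continuous V := hVd.continuous
  -- periodicity at endpoints
  have hUT : U T = U (-T) := by have := hUper (-T); simpa [show -T + 2 * T = T by ring] using this
  have hVT : V T = V (-T) := by have := hVper (-T); simpa [show -T + 2 * T = T by ring] using this
  -- integrability facts
  have iU2 : IntervalIntegrable (fun z => U z ^ 2) volume (-T) T :=
    (hUc.pow 2).intervalIntegrable _ _
  have iUp2 : IntervalIntegrable (fun z => U z ^ (p + 2)) volume (-T) T :=
    (hUc.pow (p + 2)).intervalIntegrable _ _
  have iUU : IntervalIntegrable (fun z => U z * U z) volume (-T) T :=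
    (hUc.mul hUc).intervalIntegrable _ _
  have iUUp1 : IntervalIntegrable (fun z => U z * U z ^ (p + 1)) volume (-T) T :=
    (hUc.mul (hUc.pow (p + 1))).intervalIntegrable _ _
  set a := ∫ z in (-T)..T, (V z) ^ 2 with ha
  set b := ∫ z in (-T)..T, U z ^ 2 with hb
  set s := ∫ z in (-T)..T, U z ^ (p + 2) with hs
  -- Step 1: pointwise energy identity gives V^2 = 2E - c U^2 + 2 U^{p+2}/(p+2)
  have key1 : ∀ z, (V z) ^ 2 = 2 * E - c * U z ^ 2 + (2 / ((p : ℝ) + 2)) * U z ^ (p + 2) := by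
    intro z
    have hv : V z = -((c - U z ^ p) * deriv U z) := by linarith [hode z]
    have h2 := hE z
    have hsq : (V z) ^ 2 = (c - U z ^ p) ^ 2 * (deriv U z) ^ 2 := by rw [hv]; ring
    field_simp at h2 ⊢
    nlinarith [h2, hsq]
  -- Step 2: integrate
  have step2 : a = 4 * E * T - c * b + (2 / ((p : ℝ) + 2)) * s := by
    have hcong : (∫ z in (-T)..T, (V z) ^ 2)
        = ∫ z in (-T)..T, (2 * E - c * U z ^ 2 + (2 / ((p : ℝ) + 2)) * U z ^ (p + 2)) := by
      apply intervalIntegral.integral_congr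
      intro x _; exact key1 x
    rw [ha, hcong, intervalIntegral.integral_add, intervalIntegral.integral_sub,
      intervalIntegral.integral_const, intervalIntegral.integral_const_mul,
      intervalIntegral.integral_const_mul]
    · simp [hb, hs]; ring
    · exact intervalIntegrable_const
    · exact iU2.const_mul c
    · exact (intervalIntegrable_const.sub (iU2.const_mul c))
    · exact iUp2.const_mul _
  -- Step 3: integration by parts identities
  have hUderiv : ∀ x ∈ Set.uIcc (-T) T, HasDerivAt V (U x) x := fun x _ => hV x
  have ibp1 : (∫ z in (-T)..T, V z * deriv U z) = -b := by
    have h := intervalIntegral.integral_mul_deriv_eq_deriv_mul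
      (u := V) (u' := U) (v := U) (v' := deriv U)
      hUderiv (fun x _ => (hU.differentiable (by simp) x).hasDerivAt)
      (hUc.intervalIntegrable _ _) (hU'c.intervalIntegrable _ _)
    rw [h, hUT, hVT]
    have : (∫ z in (-T)..T, U z * U z) = b := by
      rw [hb]; apply intervalIntegral.integral_congr; intro x _; ring
    rw [this]; ring
  have ibp2 : (((p : ℝ) + 1)) * (∫ z in (-T)..T, V z * (U z ^ p * deriv U z)) = -s := by
    have hpow : ∀ x ∈ Set.uIcc (-T) T,
        HasDerivAt (fun z => U z ^ (p + 1)) (((p : ℝ) + 1) * U x ^ p * deriv U x) x := by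
      intro x _
      have := ((hU.differentiable (by simp) x).hasDerivAt).pow (p + 1)
      exact (by simpa [Nat.add_sub_cancel] using this :
        HasDerivAt (U ^ (p + 1)) (((p : ℝ) + 1) * U x ^ p * deriv U x) x)
    have h := intervalIntegral.integral_mul_deriv_eq_deriv_mul
      (u := V) (u' := U) (v := fun z => U z ^ (p + 1))
      (v' := fun x => ((p : ℝ) + 1) * U x ^ p * deriv U x)
      hUderiv hpow (hUc.intervalIntegrable _ _)
      (((continuous_const.mul (hUc.pow p)).mul hU'c).intervalIntegrable _ _)
    have h2 : (∫ z in (-T)..T, V z * (((p : ℝ) + 1) * U z ^ p * deriv U z))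
        = ((p : ℝ) + 1) * ∫ z in (-T)..T, V z * (U z ^ p * deriv U z) := by
      rw [← intervalIntegral.integral_const_mul]
      apply intervalIntegral.integral_congr; intro x _; ring
    rw [h2] at h
    rw [h]
    rw [hUT, hVT]
    have : (∫ z in (-T)..T, U z * U z ^ (p + 1)) = s := by
      rw [hs]; apply intervalIntegral.integral_congr; intro x _; ring
    rw [this]; ring
  -- Step 4: a = c*b - s/(p+1)
  have step3 : a = c * b - (1 / ((p : ℝ) + 1)) * s := by
    have hcong : (∫ z in (-T)..T, (V z) ^ 2)
        = ∫ z in (-T)..T, (-c * (V z * deriv U z) + V z * (U z ^ p * deriv U z)) := by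
      apply intervalIntegral.integral_congr
      intro x _
      have hv : V x = -((c - U x ^ p) * deriv U x) := by linarith [hode x]
      calc (V x) ^ 2 = V x * V x := sq (V x) ▸ by ring
        _ = V x * (-((c - U x ^ p) * deriv U x)) := by rw [← hv]
        _ = -c * (V x * deriv U x) + V x * (U x ^ p * deriv U x) := by ring
    have iVU' : IntervalIntegrable (fun z => V z * deriv U z) volume (-T) T :=
      (hVc.mul hU'c).intervalIntegrable _ _
    have iVUp : IntervalIntegrable (fun z => V z * (U z ^ p * deriv U z)) volume (-T) T :=
      (hVc.mul ((hUc.pow p).mul hU'c)).intervalIntegrable _ _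
    rw [ha, hcong, intervalIntegral.integral_add (iVU'.const_mul _) iVUp,
      intervalIntegral.integral_const_mul, ibp1]
    have h2 : (∫ z in (-T)..T, V z * (U z ^ p * deriv U z)) = -s / ((p : ℝ) + 1) := by
      rw [eq_div_iff hp1]
      linarith [ibp2]
    rw [h2]; ring
  -- conclude
  have : 2 * a = 4 * E * T + ((2 / ((p : ℝ) + 2)) - 1 / ((p : ℝ) + 1)) * s := by
    linarith [step2, step3]
  have hco : ((p : ℝ) / (2 * ((p : ℝ) + 1) * ((p : ℝ) + 2)))
      = (1 / 2) * ((2 / ((p : ℝ) + 2)) - 1 / ((p : ℝ) + 1)) := by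
    field_simp; ring
  rw [hco]
  linarith [this]
end

section
/- Let L be a self-adjoint operator on a Hilbert space H with exactly one simple negative eigenvalue, a simple zero eigenvalue with eigenvector v_0, and the rest of the spectrum positive and bounded away from zero. Let φ ∈ H with ⟨φ, v_0⟩ = 0, φ ∉ ker L, and suppose ⟨L^{-1}φ, φ⟩ < 0 (where L^{-1}φ is the unique solution of Lψ = φ orthogonal to v_0). Then L restricted to the orthogonal complement of φ is nonnegative, with kernel spanned by v_0. -/
/-!
Decompose `u = a • vneg + x` and `ψ = b • vneg + z` with `x, z ⊥ vneg`. Because `lneg` is a simple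
eigenvalue isolated from the rest of the spectrum, which lies in `[0, ∞)`, the form `⟪L ·, ·⟫` is
nonnegative on `vneg^⊥`. Writing `ℓ = lneg ‖vneg‖²`, the hypotheses become
`b² ℓ + ⟪L z, z⟫ < 0` and `a b ℓ + ⟪L z, x⟫ = 0`, and the Cauchy–Schwarz inequality for the
nonnegative form on `vneg^⊥` gives `a² ℓ + ⟪L x, x⟫ ≥ 0`, strictly unless `a = 0`. In the equality
case Cauchy–Schwarz again forces `L x = 0`, so `u = x` is a multiple of `v₀`.

Without a continuous functional calculus for operators on a real Hilbert space, the
nonnegativity on `vneg^⊥` is proved with polynomials: spectral mapping for real polynomials (via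
their factorisation into linear and irreducible quadratic factors) and `‖T‖ = spectral radius`
give `‖p(T)‖ ≤ sup_{σ(T)} |p|`. For a polynomial `q` peaking at `lneg`, the powers `q(L)^m` then
converge to an operator with range in the `lneg`-eigenspace, which annihilates `vneg^⊥` in the
quadratic form.
-/

open scoped RealInnerProductSpace

open Polynomial Filter Topology

theorem isUnit_aeval_X_sub_C {R A : Type*} [CommRing R] [Ring A] [Algebra R A] {a : A} {r : R}
    (hr : r ∉ spectrum R a) : IsUnit (aeval a (X - C r)) := by
  rw [map_sub, aeval_X, aeval_C, IsUnit.sub_iff]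
  exact spectrum.notMem_iff.mp hr

theorem exists_peak_polynomial {S : Set ℝ} (hS : Bornology.IsBounded S) {l ε : ℝ} (hε : 0 < ε)
    (hgap : ∀ x ∈ S, x ≠ l → ε ≤ |x - l|) :
    ∃ f : ℝ[X], ∃ θ : ℝ, 0 ≤ θ ∧ θ < 1 ∧ f.eval l = 1 ∧
      ∀ x ∈ S, x ≠ l → 0 ≤ f.eval x ∧ f.eval x ≤ θ := by
  obtain ⟨R, hR⟩ := hS.subset_closedBall l
  set K := R ^ 2 + ε ^ 2
  have hK : 0 < K := by positivity
  refine ⟨1 - C K⁻¹ * (X - C l) ^ 2, 1 - ε ^ 2 / K, ?_, ?_, by simp, fun x hx hxl ↦ ?_⟩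
  · rw [sub_nonneg, div_le_one hK]
    nlinarith [sq_nonneg R]
  · linarith [div_pos (pow_pos hε 2) hK]
  · have hlo : ε ^ 2 ≤ (x - l) ^ 2 := by
      simpa only [sq_abs] using pow_le_pow_left₀ hε.le (hgap x hx hxl) 2
    have hhi : (x - l) ^ 2 ≤ R ^ 2 := by
      have : |x - l| ≤ R := by simpa [Real.dist_eq] using hR hx
      simpa only [sq_abs] using pow_le_pow_left₀ (abs_nonneg _) this 2
    simp only [eval_sub, eval_one, eval_mul, eval_C, eval_pow, eval_X, ← div_eq_inv_mul]
    constructor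
    · rw [sub_nonneg, div_le_one hK]
      nlinarith
    · gcongr

section SelfAdjoint

variable {H : Type*} [NormedAddCommGroup H] [InnerProductSpace ℝ H] {T : H →L[ℝ] H}

theorem exists_smul_add_mem_orthogonal (e u : H) :
    ∃ a : ℝ, ∃ x ∈ (ℝ ∙ e)ᗮ, u = a • e + x := by
  obtain ⟨y, hy, x, hx, rfl⟩ := (ℝ ∙ e).exists_add_mem_mem_orthogonal u
  obtain ⟨a, rfl⟩ := Submodule.mem_span_singleton.mp hy
  exact ⟨a, x, hx, rfl⟩

variable [CompleteSpace H]

theorem abs_le_opNorm_of_mem_spectrum {x : ℝ} (hx : x ∈ spectrum ℝ T) : |x| ≤ ‖T‖ := by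
  rcases subsingleton_or_nontrivial H with hH | hH
  · exact absurd (isUnit_of_subsingleton _) (spectrum.mem_iff.mp hx)
  · simpa using spectrum.norm_le_norm_of_mem hx

theorem isSelfAdjoint_aeval (hT : IsSelfAdjoint T) (p : ℝ[X]) : IsSelfAdjoint (aeval T p) := by
  induction p using Polynomial.induction_on' with
  | add p q hp hq => simpa only [map_add] using hp.add hq
  | monomial n a =>
    simpa only [aeval_monomial, ← Algebra.smul_def] using (IsSelfAdjoint.all a).smul (hT.pow n)

theorem IsSelfAdjoint.isUnit_quadratic (hT : IsSelfAdjoint T) {a b c : ℝ}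
    (hd : discrim a b c < 0) : IsUnit (a • T ^ 2 + b • T + c • (1 : H →L[ℝ] H)) := by
  have ha : 0 < |a| := abs_pos.mpr <| by
    rintro rfl
    simp only [discrim] at hd
    nlinarith [sq_nonneg b]
  have hβ : 0 < -discrim a b c / (4 * |a|) := div_pos (by linarith) (by positivity)
  refine ContinuousLinearMap.isUnit_of_forall_le_norm_inner_map _ (c := ⟨_, hβ.le⟩) hβ fun v ↦ ?_
  set q := ⟪(a • T ^ 2 + b • T + c • (1 : H →L[ℝ] H)) v, v⟫
  have hsq : 4 * a * q = ‖(2 * a) • T v + b • v‖ ^ 2 - discrim a b c * ‖v‖ ^ 2 := by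
    have hTT : ⟪T (T v), v⟫ = ‖T v‖ ^ 2 :=
      (hT.isSymmetric (T v) v).trans (real_inner_self_eq_norm_sq _)
    rw [norm_add_sq_real, norm_smul, norm_smul, real_inner_smul_left, real_inner_smul_right,
      mul_pow, mul_pow, Real.norm_eq_abs, Real.norm_eq_abs, sq_abs, sq_abs, discrim]
    simp only [q, pow_two, add_apply, smul_apply, mul_apply_eq_comp, one_apply_eq_self,
      inner_add_left, real_inner_smul_left, real_inner_self_eq_norm_sq]
    rw [← pow_two, hTT]
    ring
  have key : -discrim a b c * ‖v‖ ^ 2 ≤ |q| * (4 * |a|) :=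
    calc -discrim a b c * ‖v‖ ^ 2 ≤ 4 * a * q := by
          rw [hsq]; nlinarith [sq_nonneg ‖(2 * a) • T v + b • v‖]
      _ ≤ |4 * a * q| := le_abs_self _
      _ = |q| * (4 * |a|) := by rw [abs_mul, abs_mul, abs_of_pos four_pos]; ring
  change ‖v‖ ^ 2 * (-discrim a b c / (4 * |a|)) ≤ |q|
  rw [mul_div_assoc', div_le_iff₀ (by positivity)]
  linarith

theorem IsSelfAdjoint.isUnit_aeval_of_irreducible (hT : IsSelfAdjoint T) {p : ℝ[X]}
    (hp : Irreducible p) (hroot : ∀ x ∈ spectrum ℝ T, p.eval x ≠ 0) : IsUnit (aeval T p) := by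
  by_cases h : ∃ r, p.IsRoot r
  · obtain ⟨r, hr⟩ := h
    rw [← mul_divByMonic_eq_iff_isRoot.mpr hr] at hp ⊢
    have hq := (hp.isUnit_or_isUnit rfl).resolve_left (not_isUnit_X_sub_C r)
    rw [map_mul]
    exact (isUnit_aeval_X_sub_C fun hs ↦ hroot r hs hr).mul (hq.map _)
  · push Not at h
    have hdeg : p.natDegree = 2 := by
      have hpos := natDegree_pos_iff_degree_pos.mpr (degree_pos_of_irreducible hp)
      have hle := hp.natDegree_le_two
      by_contra hne
      obtain ⟨r, hr⟩ := exists_root_of_degree_eq_one (p := p)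
        (degree_eq_iff_natDegree_eq_of_pos one_pos |>.mpr (by omega))
      exact h r hr
    have ha : p.coeff 2 ≠ 0 := by
      simpa [leadingCoeff, hdeg] using leadingCoeff_ne_zero.mpr hp.ne_zero
    have hquad := eq_quadratic_of_degree_le_two hp.degree_le_two
    have hd : discrim (p.coeff 2) (p.coeff 1) (p.coeff 0) < 0 := by
      by_contra! hd
      obtain ⟨x, hx⟩ := exists_quadratic_eq_zero ha ⟨√_, (Real.mul_self_sqrt hd).symm⟩
      refine h x ?_
      rw [hquad]
      simp only [IsRoot, eval_add, eval_mul, eval_C, eval_pow, eval_X]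
      linear_combination hx
    rw [hquad]
    simp only [map_add, map_mul, aeval_C, aeval_X, map_pow]
    rw [← Algebra.smul_def, ← Algebra.smul_def, Algebra.algebraMap_eq_smul_one]
    exact hT.isUnit_quadratic hd

theorem IsSelfAdjoint.isUnit_aeval (hT : IsSelfAdjoint T) {p : ℝ[X]} (hp : p ≠ 0)
    (hroot : ∀ x ∈ spectrum ℝ T, p.eval x ≠ 0) : IsUnit (aeval T p) := by
  induction p using WfDvdMonoid.induction_on_irreducible with
  | zero => exact absurd rfl hp
  | unit u hu =>
    obtain ⟨r, hr, rfl⟩ := Polynomial.isUnit_iff.mp hu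
    simpa only [aeval_C] using hr.map _
  | mul q i hq hi ih =>
    simp only [eval_mul, mul_ne_zero_iff] at hroot
    rw [map_mul]
    exact (hT.isUnit_aeval_of_irreducible hi fun x hx ↦ (hroot x hx).1).mul
      (ih hq fun x hx ↦ (hroot x hx).2)

theorem IsSelfAdjoint.nonempty_spectrum [Nontrivial H] (hT : IsSelfAdjoint T) :
    (spectrum ℝ T).Nonempty := by
  by_contra h
  rw [Set.not_nonempty_iff_eq_empty] at h
  have h0 : T = 0 := by
    have := ContinuousLinearMap.spectralRadius_eq_nnnorm T hT
    simp only [spectralRadius, h, Set.mem_empty_iff_false, iSup_false, iSup_bot] at this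
    exact nnnorm_eq_zero.mp (ENNReal.coe_eq_zero.mp this.symm)
  simp [h0, spectrum.zero_eq] at h

theorem IsSelfAdjoint.spectrum_aeval_subset (hT : IsSelfAdjoint T) (p : ℝ[X]) :
    spectrum ℝ (aeval T p) ⊆ (fun x ↦ p.eval x) '' spectrum ℝ T := by
  intro μ hμ
  rcases subsingleton_or_nontrivial H with hH | hH
  · exact absurd (isUnit_of_subsingleton _) (spectrum.mem_iff.mp hμ)
  by_contra! h
  obtain ⟨x₀, hx₀⟩ := hT.nonempty_spectrum
  have hroot : ∀ x ∈ spectrum ℝ T, (C μ - p).eval x ≠ 0 := fun x hx ↦ by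
    rw [eval_sub, eval_C, sub_ne_zero]
    exact fun hx' ↦ h ⟨x, hx, hx'.symm⟩
  refine spectrum.mem_iff.mp hμ ?_
  simpa only [map_sub, aeval_C] using
    hT.isUnit_aeval (fun h0 ↦ hroot x₀ hx₀ (by rw [h0, eval_zero])) hroot

theorem IsSelfAdjoint.norm_aeval_le (hT : IsSelfAdjoint T) {p : ℝ[X]} {s : ℝ} (hs : 0 ≤ s)
    (hp : ∀ x ∈ spectrum ℝ T, |p.eval x| ≤ s) : ‖aeval T p‖ ≤ s := by
  have h : spectralRadius ℝ (aeval T p) ≤ ENNReal.ofReal s := by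
    refine iSup₂_le fun μ hμ ↦ ?_
    obtain ⟨x, hx, rfl⟩ := hT.spectrum_aeval_subset p hμ
    rw [← enorm_eq_nnnorm, ← ofReal_norm]
    exact ENNReal.ofReal_le_ofReal (hp x hx)
  rwa [ContinuousLinearMap.spectralRadius_eq_nnnorm _ (isSelfAdjoint_aeval hT p),
    ← enorm_eq_nnnorm, ← ofReal_norm, ENNReal.ofReal_le_ofReal_iff hs] at h

theorem IsSelfAdjoint.inner_aeval_nonneg (hT : IsSelfAdjoint T) {p : ℝ[X]}
    (hp : ∀ x ∈ spectrum ℝ T, 0 ≤ p.eval x) (v : H) : 0 ≤ ⟪aeval T p v, v⟫ := by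
  obtain ⟨s, hs⟩ := (spectrum.isCompact T).bddAbove_image p.continuous.continuousOn
  set s' := max s 0
  have hnorm : ‖aeval T (C s' - p)‖ ≤ s' := hT.norm_aeval_le (le_max_right _ _) fun x hx ↦ by
    have hpx : p.eval x ≤ s := hs ⟨x, hx, rfl⟩
    rw [eval_sub, eval_C, abs_le]
    constructor <;> linarith [hp x hx, le_max_left s 0]
  have hle : ⟪aeval T (C s' - p) v, v⟫ ≤ s' * ‖v‖ ^ 2 :=
    calc ⟪aeval T (C s' - p) v, v⟫ ≤ ‖aeval T (C s' - p) v‖ * ‖v‖ := real_inner_le_norm _ _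
      _ ≤ ‖aeval T (C s' - p)‖ * ‖v‖ * ‖v‖ := by gcongr; exact (aeval T _).le_opNorm v
      _ ≤ s' * ‖v‖ ^ 2 := by rw [mul_assoc, ← pow_two]; gcongr
  rw [map_sub, aeval_C, sub_apply, ContinuousLinearMap.algebraMap_apply, inner_sub_left,
    real_inner_smul_left, real_inner_self_eq_norm_sq] at hle
  linarith

/-- `E` is the spectral projection onto the `l`-eigenspace: on the spectrum, `q ^ m` converges
geometrically fast to the indicator of `{l}`. -/
theorem IsSelfAdjoint.exists_tendsto_aeval_pow (hT : IsSelfAdjoint T) {q : ℝ[X]} {l θ : ℝ}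
    (hθ0 : 0 ≤ θ) (hθ1 : θ < 1) (hql : q.eval l = 1)
    (hq : ∀ x ∈ spectrum ℝ T, x ≠ l → 0 ≤ q.eval x ∧ q.eval x ≤ θ) :
    ∃ E : H →L[ℝ] H, Tendsto (fun m ↦ aeval T (q ^ m)) atTop (𝓝 E) ∧
      ∀ v, T (E v) = l • E v := by
  have hstep (n : ℕ) : ‖aeval T (q ^ n) - aeval T (q ^ (n + 1))‖ ≤ θ ^ n := by
    rw [← map_sub]
    refine hT.norm_aeval_le (pow_nonneg hθ0 n) fun x hx ↦ ?_
    rw [eval_sub, eval_pow, eval_pow]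
    rcases eq_or_ne x l with rfl | hxl
    · simp [hql, pow_nonneg hθ0]
    · obtain ⟨h0, h1⟩ := hq x hx hxl
      rw [pow_succ, ← mul_one_sub, abs_of_nonneg (mul_nonneg (pow_nonneg h0 n) (by linarith))]
      calc _ ≤ θ ^ n * 1 :=
            mul_le_mul (pow_le_pow_left₀ h0 h1 n) (by linarith) (by linarith) (pow_nonneg hθ0 n)
        _ = θ ^ n := mul_one _
  obtain ⟨E, hE⟩ := cauchySeq_tendsto_of_complete
    (cauchySeq_of_le_geometric (f := fun m ↦ aeval T (q ^ m)) θ 1 hθ1 fun n ↦ by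
      rw [dist_eq_norm, one_mul]
      exact hstep n)
  refine ⟨E, hE, fun v ↦ ?_⟩
  have hdecay : Tendsto (fun m ↦ aeval T (X - C l) * aeval T (q ^ m)) atTop (𝓝 0) := by
    refine squeeze_zero_norm (fun m ↦ (?_ : _ ≤ (‖T‖ + |l|) * θ ^ m)) (by
      simpa using (tendsto_pow_atTop_nhds_zero_of_lt_one hθ0 hθ1).const_mul (‖T‖ + |l|))
    rw [← map_mul]
    refine hT.norm_aeval_le (by positivity) fun x hx ↦ ?_
    rw [eval_mul, eval_sub, eval_X, eval_C, eval_pow, abs_mul, abs_pow]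
    rcases eq_or_ne x l with rfl | hxl
    · simp only [sub_self, abs_zero, zero_mul]; positivity
    · obtain ⟨h0, h1⟩ := hq x hx hxl
      have hR : |x - l| ≤ ‖T‖ + |l| := by
        linarith [abs_sub x l, abs_le_opNorm_of_mem_spectrum hx]
      rw [abs_of_nonneg h0]
      exact mul_le_mul hR (pow_le_pow_left₀ h0 h1 m) (by positivity) (by positivity)
  have hlim : aeval T (X - C l) * E = 0 := tendsto_nhds_unique (hE.const_mul _) hdecay
  simpa [sub_eq_zero] using congrArg (fun A ↦ A v) hlim

theorem IsSelfAdjoint.le_inner_of_orthogonal_eigenspace (hT : IsSelfAdjoint T) {l c : ℝ}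
    (hlc : l < c) (hspec : ∀ x ∈ spectrum ℝ T, x = l ∨ c ≤ x) {y : H}
    (hy : ∀ w, T w = l • w → ⟪w, y⟫ = 0) : c * ‖y‖ ^ 2 ≤ ⟪T y, y⟫ := by
  obtain ⟨q, θ, hθ0, hθ1, hql, hq⟩ := exists_peak_polynomial (spectrum.isBounded T)
    (sub_pos.mpr hlc) fun x hx hxl ↦ by
      have := (hspec x hx).resolve_left hxl
      rw [abs_of_nonneg (by linarith)]
      linarith
  obtain ⟨E, hE, hEl⟩ := hT.exists_tendsto_aeval_pow hθ0 hθ1 hql hq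
  -- `X - c + (c - l) q ^ m` is nonnegative on the spectrum, and its `q ^ m` part tends to
  -- `⟪E y, y⟫ = 0` because `E y` lies in the `l`-eigenspace
  have hpos (m : ℕ) : 0 ≤ ⟪aeval T (X - C c + C (c - l) * q ^ m) y, y⟫ := by
    refine hT.inner_aeval_nonneg (fun x hx ↦ ?_) y
    simp only [eval_add, eval_sub, eval_mul, eval_X, eval_C, eval_pow]
    rcases hspec x hx with rfl | hcx
    · rw [hql, one_pow]; linarith
    · have := pow_nonneg (hq x hx (by linarith)).1 m
      nlinarith
  have hlim : Tendsto (fun m ↦ ⟪aeval T (X - C c + C (c - l) * q ^ m) y, y⟫) atTop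
      (𝓝 ⟪(T - algebraMap ℝ _ c + (c - l) • E) y, y⟫) := by
    have heq (m : ℕ) : aeval T (X - C c + C (c - l) * q ^ m)
        = T - algebraMap ℝ _ c + (c - l) • aeval T (q ^ m) := by
      rw [map_add, map_sub, map_mul, aeval_X, aeval_C, aeval_C, Algebra.smul_def]
    simp only [heq]
    have hop := tendsto_const_nhds (x := T - algebraMap ℝ (H →L[ℝ] H) c)
      |>.add (hE.const_smul (c - l))
    exact (((ContinuousLinearMap.apply ℝ H y).continuous.tendsto _).comp hop).inner
      tendsto_const_nhds
  have := ge_of_tendsto' hlim hpos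
  rw [add_apply, sub_apply, smul_apply, ContinuousLinearMap.algebraMap_apply, inner_add_left,
    inner_sub_left, real_inner_smul_left, real_inner_smul_left, real_inner_self_eq_norm_sq,
    hy _ (hEl y)] at this
  linarith

theorem IsSelfAdjoint.inner_sq_le_of_nonneg_on (hT : IsSelfAdjoint T) {W : Submodule ℝ H}
    (hW : ∀ x ∈ W, 0 ≤ ⟪T x, x⟫) {x z : H} (hx : x ∈ W) (hz : z ∈ W) :
    ⟪T x, z⟫ ^ 2 ≤ ⟪T x, x⟫ * ⟪T z, z⟫ := by
  have key (t : ℝ) : 0 ≤ ⟪T z, z⟫ * (t * t) + 2 * ⟪T x, z⟫ * t + ⟪T x, x⟫ := by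
    have h := hW (x + t • z) (W.add_mem hx (W.smul_mem t hz))
    have hsym : ⟪T z, x⟫ = ⟪T x, z⟫ := (hT.isSymmetric z x).trans (real_inner_comm _ _)
    simp only [map_add, map_smul, inner_add_left, inner_add_right, real_inner_smul_left,
      real_inner_smul_right, hsym] at h
    linarith
  have := discrim_le_zero key
  rw [discrim] at this
  nlinarith

theorem IsSelfAdjoint.inner_apply_smul_add_smul_add (hT : IsSelfAdjoint T) {e : H} {l : ℝ}
    (he : T e = l • e) {x z : H} (hx : x ∈ (ℝ ∙ e)ᗮ) (hz : z ∈ (ℝ ∙ e)ᗮ) (a b : ℝ) :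
    ⟪T (a • e + x), b • e + z⟫ = a * b * (l * ‖e‖ ^ 2) + ⟪T x, z⟫ := by
  rw [Submodule.mem_orthogonal_singleton_iff_inner_right] at hx hz
  have hxe : ⟪T x, e⟫ = 0 := by
    rw [show ⟪T x, e⟫ = ⟪x, T e⟫ from hT.isSymmetric x e, he, real_inner_smul_right,
      real_inner_comm, hx, mul_zero]
  simp only [map_add, map_smul, he, inner_add_left, inner_add_right, real_inner_smul_left,
    real_inner_smul_right, real_inner_self_eq_norm_sq, hz, hxe]
  ring

theorem IsSelfAdjoint.apply_eq_zero_of_inner_eq_zero (hT : IsSelfAdjoint T) {e : H} {l : ℝ}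
    (he : T e = l • e) (hW : ∀ x ∈ (ℝ ∙ e)ᗮ, 0 ≤ ⟪T x, x⟫) {x : H} (hx : x ∈ (ℝ ∙ e)ᗮ)
    (h0 : ⟪T x, x⟫ = 0) : T x = 0 := by
  obtain ⟨a, z, hz, hTx⟩ := exists_smul_add_mem_orthogonal e (T x)
  have hxz : ⟪T x, z⟫ = 0 := by
    have := hT.inner_sq_le_of_nonneg_on hW hx hz
    rw [h0, zero_mul] at this
    exact pow_eq_zero_iff two_ne_zero |>.mp (le_antisymm this (sq_nonneg _))
  have := hT.inner_apply_smul_add_smul_add he hx hz 0 a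
  rw [zero_smul, zero_add, zero_mul, zero_mul, zero_add, hxz, ← hTx] at this
  exact inner_self_eq_zero.mp this

end SelfAdjoint

theorem constrained_quadratic_nonneg {ℓ a b s Qu Qψ : ℝ} (hQu : 0 ≤ Qu) (hQψ : 0 ≤ Qψ)
    (hcs : s ^ 2 ≤ Qψ * Qu) (hneg : b * b * ℓ + Qψ < 0) (hcon : b * a * ℓ + s = 0) :
    0 ≤ a * a * ℓ + Qu ∧ (a * a * ℓ + Qu = 0 → a = 0) := by
  have hbℓ : 0 < -(b * b * ℓ) := by linarith
  have hs : s ^ 2 = -(b * b * ℓ) * -(a * a * ℓ) := by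
    rw [show s = -(b * a * ℓ) by linarith]; ring
  have h1 : -(b * b * ℓ) * -(a * a * ℓ) ≤ -(b * b * ℓ) * Qu := by
    nlinarith [mul_le_mul_of_nonneg_right hneg.le hQu]
  refine ⟨by nlinarith [le_of_mul_le_mul_left h1 hbℓ], fun h0 ↦ ?_⟩
  by_contra ha
  have hℓ : ℓ < 0 := neg_of_mul_neg_right (by linarith) (mul_self_nonneg b)
  have hQu' : 0 < Qu := by nlinarith [mul_self_pos.mpr ha]
  nlinarith [mul_lt_mul_of_pos_right (show Qψ < -(b * b * ℓ) by linarith) hQu']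

theorem constrained_positivity_general
    (H : Type*) [NormedAddCommGroup H] [InnerProductSpace ℝ H] [CompleteSpace H]
    (L : H →L[ℝ] H) (hsa : IsSelfAdjoint L)
    (lneg : ℝ) (hlneg : lneg < 0) (vneg : H)
    (heigneg : L vneg = lneg • vneg)
    (hsimpleneg : ∀ w : H, L w = lneg • w → ∃ a : ℝ, w = a • vneg)
    (honlyneg : ∀ μ ∈ spectrum ℝ L, μ < 0 → μ = lneg)
    (v0 : H)
    (hsimple0 : ∀ w : H, L w = 0 → ∃ a : ℝ, w = a • v0)
    (φ : H)
    (ψ : H) (hψ : L ψ = φ) (hslope : ⟪ψ, φ⟫ < 0) :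
    ∀ u : H, ⟪u, φ⟫ = 0 →
      0 ≤ ⟪L u, u⟫ ∧ (⟪L u, u⟫ = 0 → ∃ a : ℝ, u = a • v0) := by
  have hW : ∀ x ∈ (ℝ ∙ vneg)ᗮ, 0 ≤ ⟪L x, x⟫ := fun x hx ↦ by
    have hx' := Submodule.mem_orthogonal_singleton_iff_inner_right.mp hx
    simpa using hsa.le_inner_of_orthogonal_eigenspace hlneg
      (fun μ hμ ↦ (lt_or_ge μ 0).imp (honlyneg μ hμ) id) fun w hw ↦ by
        obtain ⟨a, rfl⟩ := hsimpleneg w hw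
        rw [real_inner_smul_left, hx', mul_zero]
  intro u hu
  obtain ⟨a, x, hx, rfl⟩ := exists_smul_add_mem_orthogonal vneg u
  obtain ⟨b, z, hz, rfl⟩ := exists_smul_add_mem_orthogonal vneg ψ
  subst hψ
  rw [real_inner_comm, hsa.inner_apply_smul_add_smul_add heigneg hz hx] at hu
  rw [real_inner_comm, hsa.inner_apply_smul_add_smul_add heigneg hz hz] at hslope
  rw [hsa.inner_apply_smul_add_smul_add heigneg hx hx]
  obtain ⟨hnonneg, ha⟩ := constrained_quadratic_nonneg (hW x hx) (hW z hz)
    (hsa.inner_sq_le_of_nonneg_on hW hz hx) hslope hu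
  refine ⟨hnonneg, fun h0 ↦ ?_⟩
  obtain rfl := ha h0
  obtain ⟨c, rfl⟩ := hsimple0 x
    (hsa.apply_eq_zero_of_inner_eq_zero heigneg hW hx (by simpa using h0))
  exact ⟨c, by rw [zero_smul, zero_add]⟩

/-- Let `L` be a self-adjoint (bounded) operator on a real Hilbert space with
exactly one simple negative eigenvalue, a simple zero eigenvalue with eigenvector
`v₀`, and the rest of the spectrum positive and bounded away from zero. Let
`φ ⊥ v₀`, `φ ≠ 0`, and suppose `Lψ = φ` with `⟨ψ, φ⟩ < 0`. Then `L` restricted to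
the orthogonal complement of `φ` is nonnegative, with kernel spanned by `v₀`. -/
theorem constrained_positivity
    (H : Type*) [NormedAddCommGroup H] [InnerProductSpace ℝ H] [CompleteSpace H]
    (L : H →L[ℝ] H) (hsa : IsSelfAdjoint L)
    (lneg : ℝ) (hlneg : lneg < 0) (vneg : H) (hvneg : vneg ≠ 0)
    (heigneg : L vneg = lneg • vneg)
    (hsimpleneg : ∀ w : H, L w = lneg • w → ∃ a : ℝ, w = a • vneg)
    (honlyneg : ∀ μ ∈ spectrum ℝ L, μ < 0 → μ = lneg)
    (v0 : H) (hv0 : v0 ≠ 0) (hker : L v0 = 0)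
    (hsimple0 : ∀ w : H, L w = 0 → ∃ a : ℝ, w = a • v0)
    (hgap : ∃ δ > (0 : ℝ), ∀ μ ∈ spectrum ℝ L, μ = lneg ∨ μ = 0 ∨ δ ≤ μ)
    (φ : H) (hφv0 : ⟪φ, v0⟫ = 0) (hφ : φ ≠ 0)
    (ψ : H) (hψ : L ψ = φ) (hslope : ⟪ψ, φ⟫ < 0) :
    ∀ u : H, ⟪u, φ⟫ = 0 →
      0 ≤ ⟪L u, u⟫ ∧ (⟪L u, u⟫ = 0 → ∃ a : ℝ, u = a • v0) :=
  constrained_positivity_general H L hsa lneg hlneg vneg heigneg hsimpleneg honlyneg v0 hsimple0 φ ψ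
    hψ hslope
end

section
/- Suppose for each c in an open interval the quantities Q(c) > 0 and H(c) satisfy H'(c) + c Q'(c) = 0 and H(c) = -E(c)T - ((p+4)/(4(p+1)(p+2))) I(c), cQ(c) = E(c)T + ((3p+4)/(4(p+1)(p+2))) I(c), where E is differentiable with E'(c) > 0, T > 0, and I is differentiable. Then I'(c) = (2(p+1)(p+2)/p) Q(c) > 0 and c Q'(c) = T E'(c) + ((p+4)/(2p)) Q(c) > 0; in particular Q is strictly increasing. -/
/-!
Differentiating the two identities for `H` and `cQ` and substituting `H' = -cQ'` gives the linear
system `cQ' = TE' + κ₂ I'` and `Q + cQ' = TE' + κ₃ I'`, where `κ₂, κ₃` are the coefficients of `I`.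
Subtracting, `Q = (κ₃ - κ₂) I'` with `κ₃ - κ₂ = p / (2(p+1)(p+2)) > 0`, which yields the formula
for `I'`, and then the one for `cQ'`. Both right-hand sides are positive, and `c > 0`, so `Q' > 0`.
-/

open Set

theorem HasDerivAt.eq_of_eqOn {𝕜 F : Type*} [NontriviallyNormedField 𝕜] [NormedAddCommGroup F]
    [NormedSpace 𝕜 F] {f g : 𝕜 → F} {f' g' : F} {s : Set 𝕜} {x : 𝕜} (hs : IsOpen s)
    (hx : x ∈ s) (hfg : EqOn f g s) (hf : HasDerivAt f f' x) (hg : HasDerivAt g g' x) :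
    f' = g' :=
  hf.unique (hg.congr_of_eventuallyEq (Filter.eventuallyEq_of_mem (hs.mem_nhds hx) hfg))

theorem strictMonoOn_of_hasDerivAt_pos {D : Set ℝ} (hD : Convex ℝ D) {f f' : ℝ → ℝ}
    (hf : ∀ x ∈ D, HasDerivAt f (f' x) x) (hf' : ∀ x ∈ D, 0 < f' x) :
    StrictMonoOn f D :=
  strictMonoOn_of_hasDerivWithinAt_pos hD (fun x hx ↦ (hf x hx).continuousAt.continuousWithinAt)
    (fun x hx ↦ (hf x (interior_subset hx)).hasDerivWithinAt)
    (fun x hx ↦ hf' x (interior_subset hx))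

theorem derivs_eq_of_identities {p T c Q Q' E' I' H' : ℝ} (hp : 0 < p) (h₁ : H' + c * Q' = 0)
    (h₂ : H' = -E' * T - (p + 4) / (4 * (p + 1) * (p + 2)) * I')
    (h₃ : Q + c * Q' = E' * T + (3 * p + 4) / (4 * (p + 1) * (p + 2)) * I') :
    I' = 2 * (p + 1) * (p + 2) / p * Q ∧ c * Q' = T * E' + (p + 4) / (2 * p) * Q := by
  have hcQ' : c * Q' = E' * T + (p + 4) / (4 * (p + 1) * (p + 2)) * I' := by linarith
  have hQ : Q = ((3 * p + 4) / (4 * (p + 1) * (p + 2)) - (p + 4) / (4 * (p + 1) * (p + 2))) * I' :=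
    by linarith
  have hI' : I' = 2 * (p + 1) * (p + 2) / p * Q := by
    rw [hQ]
    field_simp
    ring
  refine ⟨hI', ?_⟩
  rw [hcQ', hI']
  field_simp
  ring

theorem Q_strictMono_general (T : ℝ) (hT : 0 < T) (p : ℕ) (hp : 1 ≤ p)
    (a b : ℝ) (ha : 0 < a)
    (E Q Hf I E' Q' H' I' : ℝ → ℝ)
    (hE : ∀ c ∈ Set.Ioo a b, HasDerivAt E (E' c) c)
    (hQ : ∀ c ∈ Set.Ioo a b, HasDerivAt Q (Q' c) c)
    (hH : ∀ c ∈ Set.Ioo a b, HasDerivAt Hf (H' c) c)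
    (hI : ∀ c ∈ Set.Ioo a b, HasDerivAt I (I' c) c)
    (hQpos : ∀ c ∈ Set.Ioo a b, 0 < Q c)
    (hE'pos : ∀ c ∈ Set.Ioo a b, 0 < E' c)
    (hid1 : ∀ c ∈ Set.Ioo a b, H' c + c * Q' c = 0)
    (hid2 : ∀ c ∈ Set.Ioo a b, Hf c = -(E c) * T
      - (((p : ℝ) + 4) / (4 * ((p : ℝ) + 1) * ((p : ℝ) + 2))) * I c)
    (hid3 : ∀ c ∈ Set.Ioo a b, c * Q c = E c * T
      + ((3 * (p : ℝ) + 4) / (4 * ((p : ℝ) + 1) * ((p : ℝ) + 2))) * I c) :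
    (∀ c ∈ Set.Ioo a b,
      I' c = (2 * ((p : ℝ) + 1) * ((p : ℝ) + 2) / (p : ℝ)) * Q c ∧ 0 < I' c) ∧
    (∀ c ∈ Set.Ioo a b,
      c * Q' c = T * E' c + (((p : ℝ) + 4) / (2 * (p : ℝ))) * Q c ∧ 0 < c * Q' c) ∧
    StrictMonoOn Q (Set.Ioo a b) := by
  have hp₀ : (0 : ℝ) < p := by exact_mod_cast hp
  have hderivs (c) (hc : c ∈ Ioo a b) :
      I' c = 2 * (p + 1) * (p + 2) / p * Q c ∧
        c * Q' c = T * E' c + (p + 4) / (2 * p) * Q c := by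
    refine derivs_eq_of_identities hp₀ (hid1 c hc) ?_ ?_
    · exact (hH c hc).eq_of_eqOn isOpen_Ioo hc hid2
        ((((hE c hc).neg).mul_const T).sub ((hI c hc).const_mul _))
    · simpa only [one_mul] using
        ((hasDerivAt_id' c).mul (hQ c hc)).eq_of_eqOn isOpen_Ioo hc hid3
        (((hE c hc).mul_const T).add ((hI c hc).const_mul _))
  have hcQ'_pos (c) (hc : c ∈ Ioo a b) : 0 < c * Q' c := by
    rw [(hderivs c hc).2]
    have := hE'pos c hc
    have := hQpos c hc
    positivity
  refine ⟨fun c hc ↦ ⟨(hderivs c hc).1, ?_⟩,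
    fun c hc ↦ ⟨(hderivs c hc).2, hcQ'_pos c hc⟩, ?_⟩
  · rw [(hderivs c hc).1]
    have := hQpos c hc
    positivity
  · refine strictMonoOn_of_hasDerivAt_pos (convex_Ioo a b) hQ fun c hc ↦ ?_
    exact pos_of_mul_pos_right (hcQ'_pos c hc) (ha.trans hc.1).le

/-- Suppose on an interval `(a,b) ⊂ (0,∞)` of speeds the quantities `Q > 0` and `H`
satisfy `H' + cQ' = 0`, `H = -ET - ((p+4)/(4(p+1)(p+2)))I` and
`cQ = ET + ((3p+4)/(4(p+1)(p+2)))I`, with `E' > 0` and `T > 0`. Then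
`I' = (2(p+1)(p+2)/p)Q > 0` and `cQ' = TE' + ((p+4)/(2p))Q > 0`; in particular `Q`
is strictly increasing. -/
theorem Q_strictMono (T : ℝ) (hT : 0 < T) (p : ℕ) (hp : 1 ≤ p)
    (a b : ℝ) (ha : 0 < a) (hab : a < b)
    (E Q Hf I E' Q' H' I' : ℝ → ℝ)
    (hE : ∀ c ∈ Set.Ioo a b, HasDerivAt E (E' c) c)
    (hQ : ∀ c ∈ Set.Ioo a b, HasDerivAt Q (Q' c) c)
    (hH : ∀ c ∈ Set.Ioo a b, HasDerivAt Hf (H' c) c)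
    (hI : ∀ c ∈ Set.Ioo a b, HasDerivAt I (I' c) c)
    (hQpos : ∀ c ∈ Set.Ioo a b, 0 < Q c)
    (hE'pos : ∀ c ∈ Set.Ioo a b, 0 < E' c)
    (hid1 : ∀ c ∈ Set.Ioo a b, H' c + c * Q' c = 0)
    (hid2 : ∀ c ∈ Set.Ioo a b, Hf c = -(E c) * T
      - (((p : ℝ) + 4) / (4 * ((p : ℝ) + 1) * ((p : ℝ) + 2))) * I c)
    (hid3 : ∀ c ∈ Set.Ioo a b, c * Q c = E c * T
      + ((3 * (p : ℝ) + 4) / (4 * ((p : ℝ) + 1) * ((p : ℝ) + 2))) * I c) :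
    (∀ c ∈ Set.Ioo a b,
      I' c = (2 * ((p : ℝ) + 1) * ((p : ℝ) + 2) / (p : ℝ)) * Q c ∧ 0 < I' c) ∧
    (∀ c ∈ Set.Ioo a b,
      c * Q' c = T * E' c + (((p : ℝ) + 4) / (2 * (p : ℝ))) * Q c ∧ 0 < c * Q' c) ∧
    StrictMonoOn Q (Set.Ioo a b) :=
  Q_strictMono_general T hT p hp a b ha E Q Hf I E' Q' H' I' hE hQ hH hI hQpos hE'pos hid1 hid2 hid3
end
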